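/- arXiv:2501.09189 — 3 statements merged into one kernel-verified Lean document; each statement's English description precedes it below -/
import Mathlib

section
/- Let d, k ≥ 1, B > 0, ε > 0, let 𝒞 be a finite partition of ℝ^d into Borel sets, and let S be a nonempty finite tuple of points of ℝ^d. Suppose that for every A ∈ 𝒞 and every monomial m(x) = ∏_j x_j^{α_j} of total degree at most k, |E_{x∼S}[m(x)·1_A(x)] − E_{x∼N(0,I_d)}[m(x)·1_A(x)]| ≤ ε/((d+1)^k · |𝒞| · B). Then for every measurable function f : ℝ^d → {0,1} that has (ν, B)-sandwiching degree at most k in L1 norm under N(0,I_d) with respect to 𝒞, one has |Pr_{x∼S}[f(x)=1] − Pr_{x∼N(0,I_d)}[f(x)=1]| ≤ ν + 2ε. -/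
open MeasureTheory ProbabilityTheory Real
open scoped ENNReal

noncomputable section

/-- The standard Gaussian measure `N(0, I_d)` on `ℝ^d`. -/
def stdGaussian (d : ℕ) : Measure (Fin d → ℝ) := Measure.pi fun _ => gaussianReal 0 1

/-- Number of entries of the tuple `S` satisfying `P` (with multiplicity). -/
def cnt {N : ℕ} {α : Type*} (S : Fin N → α) (P : α → Prop) : ℕ :=
  Nat.card {i : Fin N // P (S i)}

/-- Fraction of entries of the tuple `S` satisfying `P` (with multiplicity). -/
def frac {N : ℕ} {α : Type*} (S : Fin N → α) (P : α → Prop) : ℝ :=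
  (cnt S P : ℝ) / N

/-- Average of `g` over the entries of the tuple `S` (with multiplicity). -/
def avg {N : ℕ} {α : Type*} (S : Fin N → α) (g : α → ℝ) : ℝ :=
  (∑ i, g (S i)) / N

/-- `f` has `(ν, B)`-sandwiching degree at most `k` in `L1` norm under `N(0, I_d)` with
respect to the partition `𝒞`: there are, for each `A ∈ 𝒞`, polynomials `p_down^A, p_up^A`
of degree at most `k` with coefficients bounded by `B`, such that
`Σ_A p_down^A·1_A ≤ f ≤ Σ_A p_up^A·1_A` pointwise and
`E_{N(0,I_d)}[Σ_A (p_up^A - p_down^A)·1_A] ≤ ν`. -/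
def SandwichL1 {d : ℕ} (𝒞 : Finset (Set (Fin d → ℝ))) (f : (Fin d → ℝ) → ℝ)
    (k : ℕ) (ν B : ℝ) : Prop :=
  ∃ pd pu : Set (Fin d → ℝ) → MvPolynomial (Fin d) ℝ,
    (∀ A ∈ 𝒞, (pd A).totalDegree ≤ k ∧ (pu A).totalDegree ≤ k ∧
      (∀ m, |(pd A).coeff m| ≤ B) ∧ (∀ m, |(pu A).coeff m| ≤ B)) ∧
    (∀ x, (∑ A ∈ 𝒞, Set.indicator A (fun y => MvPolynomial.eval y (pd A)) x) ≤ f x ∧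
      f x ≤ ∑ A ∈ 𝒞, Set.indicator A (fun y => MvPolynomial.eval y (pu A)) x) ∧
    (∫ x, (∑ A ∈ 𝒞, Set.indicator A
        (fun y => MvPolynomial.eval y (pu A) - MvPolynomial.eval y (pd A)) x)
      ∂(stdGaussian d)) ≤ ν

/-! Expanding a cell polynomial in monomials, the per-monomial moment error `δ` adds up to at most
`#support · B · δ ≤ (d+1)^k · B · δ` on each cell, hence to at most `ε` over the `|𝒞|` cells: both
sandwiching functions have sample average within `ε` of their Gaussian mean. Since averages and
integrals are monotone, `f` is caught between them, and the `L1` gap `ν` of the sandwich accounts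
for the rest. -/

open Finset

lemma integrable_pow_gaussianReal (μ : ℝ) (v : NNReal) (n : ℕ) :
    Integrable (fun x : ℝ => x ^ n) (gaussianReal μ v) :=
  (memLp_id_gaussianReal n).integrable_norm_pow'.mono (by fun_prop)
    (ae_of_all _ fun x => by simp)

lemma integrable_monomial_stdGaussian (d : ℕ) (α : Fin d → ℕ) :
    Integrable (fun y : Fin d → ℝ => ∏ j, y j ^ α j) (stdGaussian d) :=
  Integrable.fintype_prod fun j => integrable_pow_gaussianReal 0 1 (α j)

namespace MvPolynomial

variable {σ R : Type*} [CommSemiring R]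

lemma sum_le_totalDegree [Fintype σ] {p : MvPolynomial σ R} {m : σ →₀ ℕ}
    (hm : m ∈ p.support) : ∑ i, m i ≤ p.totalDegree :=
  (Finsupp.sum_fintype _ _ fun _ => rfl).symm.trans_le (le_totalDegree hm)

/-- A monomial of degree at most `k` is encoded by the sorted list of its variables, read as a
word of length `k` over `Option σ` padded with `none`. -/
lemma card_support_le_of_totalDegree_le [Fintype σ] [LinearOrder σ] {p : MvPolynomial σ R}
    {k : ℕ} (hp : p.totalDegree ≤ k) : #p.support ≤ (Fintype.card σ + 1) ^ k := by
  let word (m : σ →₀ ℕ) (t : Fin k) : Option σ := (Finsupp.toMultiset m).sort[(t : ℕ)]?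
  have hlen : ∀ m ∈ p.support, (Finsupp.toMultiset m).sort.length ≤ k := fun m hm => by
    rw [Multiset.length_sort, Finsupp.card_toMultiset]
    exact (le_totalDegree hm).trans hp
  have hinj : Set.InjOn word p.support := by
    intro m hm m' hm' h
    rw [← Finsupp.toMultiset_toFinsupp m, ← Finsupp.toMultiset_toFinsupp m']
    congr 1
    rw [← Multiset.sort_eq (Finsupp.toMultiset m) (· ≤ ·),
      ← Multiset.sort_eq (Finsupp.toMultiset m') (· ≤ ·)]
    congr 1
    refine List.ext_getElem? fun n => ?_
    by_cases hn : n < k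
    · exact congrFun h ⟨n, hn⟩
    · rw [List.getElem?_eq_none (by linarith [hlen m hm]),
        List.getElem?_eq_none (by linarith [hlen m' hm'])]
  calc #p.support ≤ #(univ : Finset (Fin k → Option σ)) :=
        card_le_card_of_injOn word (fun _ _ => mem_coe.2 (mem_univ _)) hinj
    _ = (Fintype.card σ + 1) ^ k := by simp

end MvPolynomial

section avg

variable {N : ℕ} {α : Type*} (S : Fin N → α)

lemma avg_finset_sum {ι : Type*} (T : Finset ι) (g : ι → α → ℝ) :
    avg S (fun x => ∑ i ∈ T, g i x) = ∑ i ∈ T, avg S (g i) := by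
  rw [avg, Finset.sum_comm, Finset.sum_div]
  rfl

lemma avg_const_mul (c : ℝ) (g : α → ℝ) : avg S (fun x => c * g x) = c * avg S g := by
  rw [avg, avg, ← Finset.mul_sum, mul_div_assoc]

lemma avg_mono {g h : α → ℝ} (hgh : ∀ x, g x ≤ h x) : avg S g ≤ avg S h :=
  div_le_div_of_nonneg_right (Finset.sum_le_sum fun i _ => hgh (S i)) N.cast_nonneg

lemma frac_eq_avg_of_zero_or_one {f : α → ℝ} (hf : ∀ x, f x = 0 ∨ f x = 1) :
    frac S (fun x => f x = 1) = avg S f := by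
  rw [frac, avg, cnt, Nat.card_eq_fintype_card, Fintype.card_subtype, ← Finset.sum_boole]
  congr 1
  refine Finset.sum_congr rfl fun i _ => ?_
  rcases hf (S i) with h | h <;> simp [h]

variable [MeasurableSpace α] {μ : Measure α}

lemma abs_avg_sub_integral_le_of_sandwich {f lo hi : α → ℝ} {ν ε : ℝ}
    (hlo : Integrable lo μ) (hhi : Integrable hi μ) (hf : AEStronglyMeasurable f μ)
    (hlof : ∀ x, lo x ≤ f x) (hfhi : ∀ x, f x ≤ hi x)
    (hgap : ∫ x, hi x ∂μ - ∫ x, lo x ∂μ ≤ ν)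
    (hlo_err : |avg S lo - ∫ x, lo x ∂μ| ≤ ε) (hhi_err : |avg S hi - ∫ x, hi x ∂μ| ≤ ε) :
    |avg S f - ∫ x, f x ∂μ| ≤ ν + ε := by
  have h₁ := avg_mono S hlof
  have h₂ := avg_mono S hfhi
  have hfi : Integrable f μ :=
    integrable_of_le_of_le hf (ae_of_all _ hlof) (ae_of_all _ hfhi) hlo hhi
  have h₃ := integral_mono hlo hfi hlof
  have h₄ := integral_mono hfi hhi hfhi
  rw [abs_le] at hlo_err hhi_err ⊢
  constructor <;> linarith [hlo_err.1, hlo_err.2, hhi_err.1, hhi_err.2]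

end avg

lemma mul_div_le_of_nonneg {K : Type*} [Semifield K] [Preorder K] (a : K) {b : K}
    (hb : 0 ≤ b) : a * (b / a) ≤ b := by
  rcases eq_or_ne a 0 with ha | ha
  · simpa [ha] using hb
  · exact (mul_div_cancel₀ b ha).le

lemma measureReal_eq_integral_of_zero_or_one {α : Type*} [MeasurableSpace α] (μ : Measure α)
    {f : α → ℝ} (hf : ∀ x, f x = 0 ∨ f x = 1) (hfm : Measurable f) :
    μ.real {x | f x = 1} = ∫ x, f x ∂μ := by
  have hind : f = {x | f x = 1}.indicator 1 := by
    funext x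
    rcases hf x with h | h <;> simp [Set.indicator, h]
  conv_rhs => rw [hind]
  exact (integral_indicator_one (hfm (measurableSet_singleton 1))).symm

def cellwiseEval {d : ℕ} (𝒞 : Finset (Set (Fin d → ℝ)))
    (q : Set (Fin d → ℝ) → MvPolynomial (Fin d) ℝ) (x : Fin d → ℝ) : ℝ :=
  ∑ A ∈ 𝒞, A.indicator (fun y => MvPolynomial.eval y (q A)) x

lemma cellwiseEval_sub {d : ℕ} (𝒞 : Finset (Set (Fin d → ℝ)))
    (q r : Set (Fin d → ℝ) → MvPolynomial (Fin d) ℝ) (x : Fin d → ℝ) :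
    cellwiseEval 𝒞 q x - cellwiseEval 𝒞 r x
      = ∑ A ∈ 𝒞,
          A.indicator (fun y => MvPolynomial.eval y (q A) - MvPolynomial.eval y (r A)) x := by
  simp only [cellwiseEval, ← Finset.sum_sub_distrib, Set.indicator_sub]

section cells

variable {d k N : ℕ} (S : Fin N → (Fin d → ℝ)) {μ : Measure (Fin d → ℝ)}

lemma integrable_indicator_eval (hμ : ∀ α : Fin d → ℕ, Integrable (fun y => ∏ j, y j ^ α j) μ)
    {A : Set (Fin d → ℝ)} (hA : MeasurableSet A) (p : MvPolynomial (Fin d) ℝ) :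
    Integrable (A.indicator fun y => MvPolynomial.eval y p) μ := by
  simp only [MvPolynomial.eval_eq']
  exact (integrable_finsetSum _ fun (m : Fin d →₀ ℕ) _ =>
    (hμ m).const_mul (p.coeff m)).indicator hA

lemma avg_sub_integral_indicator_eval
    (hμ : ∀ α : Fin d → ℕ, Integrable (fun y => ∏ j, y j ^ α j) μ)
    {A : Set (Fin d → ℝ)} (hA : MeasurableSet A) (p : MvPolynomial (Fin d) ℝ) :
    avg S (A.indicator fun y => MvPolynomial.eval y p)
        - ∫ x, A.indicator (fun y => MvPolynomial.eval y p) x ∂μ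
      = ∑ m ∈ p.support, p.coeff m * (avg S (A.indicator fun y => ∏ j, y j ^ m j)
          - ∫ x, A.indicator (fun y => ∏ j, y j ^ m j) x ∂μ) := by
  have hexpand : (A.indicator fun y => MvPolynomial.eval y p)
      = fun x => ∑ m ∈ p.support, p.coeff m * A.indicator (fun y => ∏ j, y j ^ m j) x := by
    funext x
    by_cases hx : x ∈ A <;> simp [hx, MvPolynomial.eval_eq']
  rw [hexpand, avg_finset_sum, integral_finsetSum _
    fun (m : Fin d →₀ ℕ) _ => ((hμ m).indicator hA).const_mul (p.coeff m),
    ← Finset.sum_sub_distrib]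
  refine Finset.sum_congr rfl fun m _ => ?_
  rw [avg_const_mul, integral_const_mul, mul_sub]

lemma abs_avg_sub_integral_indicator_eval_le
    (hμ : ∀ α : Fin d → ℕ, Integrable (fun y => ∏ j, y j ^ α j) μ)
    {A : Set (Fin d → ℝ)} (hA : MeasurableSet A) {p : MvPolynomial (Fin d) ℝ} {B δ : ℝ}
    (hB : 0 ≤ B) (hdeg : p.totalDegree ≤ k) (hcoeff : ∀ m, |p.coeff m| ≤ B)
    (hmom : ∀ α : Fin d → ℕ, ∑ j, α j ≤ k →
      |avg S (A.indicator fun y => ∏ j, y j ^ α j)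
        - ∫ x, A.indicator (fun y => ∏ j, y j ^ α j) x ∂μ| ≤ δ) :
    |avg S (A.indicator fun y => MvPolynomial.eval y p)
        - ∫ x, A.indicator (fun y => MvPolynomial.eval y p) x ∂μ|
      ≤ ((d : ℝ) + 1) ^ k * (B * δ) := by
  have hδ : 0 ≤ δ := (abs_nonneg _).trans (hmom 0 (by simp))
  have hcard : (#p.support : ℝ) ≤ ((d : ℝ) + 1) ^ k := by
    exact_mod_cast (MvPolynomial.card_support_le_of_totalDegree_le hdeg).trans_eq
      (by rw [Fintype.card_fin])
  rw [avg_sub_integral_indicator_eval S hμ hA]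
  calc _ ≤ ∑ m ∈ p.support, |p.coeff m * (avg S (A.indicator fun y => ∏ j, y j ^ m j)
          - ∫ x, A.indicator (fun y => ∏ j, y j ^ m j) x ∂μ)| := Finset.abs_sum_le_sum_abs _ _
    _ ≤ ∑ _m ∈ p.support, B * δ := Finset.sum_le_sum fun m hm => by
        rw [abs_mul]
        exact mul_le_mul (hcoeff m) (hmom m ((MvPolynomial.sum_le_totalDegree hm).trans hdeg))
          (abs_nonneg _) hB
    _ = #p.support * (B * δ) := by rw [Finset.sum_const, nsmul_eq_mul]
    _ ≤ ((d : ℝ) + 1) ^ k * (B * δ) := by gcongr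

lemma integrable_cellwiseEval (hμ : ∀ α : Fin d → ℕ, Integrable (fun y => ∏ j, y j ^ α j) μ)
    {𝒞 : Finset (Set (Fin d → ℝ))} (hmeas : ∀ A ∈ 𝒞, MeasurableSet A)
    (q : Set (Fin d → ℝ) → MvPolynomial (Fin d) ℝ) : Integrable (cellwiseEval 𝒞 q) μ :=
  integrable_finsetSum _ fun A hA => integrable_indicator_eval hμ (hmeas A hA) (q A)

lemma abs_avg_sub_integral_cellwiseEval_le
    (hμ : ∀ α : Fin d → ℕ, Integrable (fun y => ∏ j, y j ^ α j) μ)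
    {𝒞 : Finset (Set (Fin d → ℝ))} (hmeas : ∀ A ∈ 𝒞, MeasurableSet A)
    {q : Set (Fin d → ℝ) → MvPolynomial (Fin d) ℝ} {B δ : ℝ} (hB : 0 ≤ B)
    (hdeg : ∀ A ∈ 𝒞, (q A).totalDegree ≤ k) (hcoeff : ∀ A ∈ 𝒞, ∀ m, |(q A).coeff m| ≤ B)
    (hmom : ∀ A ∈ 𝒞, ∀ α : Fin d → ℕ, ∑ j, α j ≤ k →
      |avg S (A.indicator fun y => ∏ j, y j ^ α j)
        - ∫ x, A.indicator (fun y => ∏ j, y j ^ α j) x ∂μ| ≤ δ) :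
    |avg S (cellwiseEval 𝒞 q) - ∫ x, cellwiseEval 𝒞 q x ∂μ|
      ≤ #𝒞 * (((d : ℝ) + 1) ^ k * (B * δ)) := by
  unfold cellwiseEval
  rw [avg_finset_sum, integral_finsetSum _
    fun A hA => integrable_indicator_eval hμ (hmeas A hA) (q A), ← Finset.sum_sub_distrib,
    ← nsmul_eq_mul, ← Finset.sum_const]
  exact (Finset.abs_sum_le_sum_abs _ _).trans <| Finset.sum_le_sum fun A hA =>
    abs_avg_sub_integral_indicator_eval_le S hμ (hmeas A hA) hB (hdeg A hA) (hcoeff A hA)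
      (hmom A hA)

end cells

theorem sandwiching_L1_implies_fooling_general
    {d k : ℕ} (B ε ν : ℝ) (hB : 0 < B) (hε : 0 < ε)
    (𝒞 : Finset (Set (Fin d → ℝ)))
    (hmeas : ∀ A ∈ 𝒞, MeasurableSet A)
    {N : ℕ} (S : Fin N → (Fin d → ℝ))
    (hmom : ∀ A ∈ 𝒞, ∀ α : Fin d → ℕ, (∑ j, α j) ≤ k →
      |avg S (Set.indicator A (fun y => ∏ j, y j ^ α j))
          - ∫ x, Set.indicator A (fun y => ∏ j, y j ^ α j) x ∂(stdGaussian d)|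
        ≤ ε / (((d : ℝ) + 1) ^ k * (𝒞.card : ℝ) * B))
    (f : (Fin d → ℝ) → ℝ) (hf01 : ∀ x, f x = 0 ∨ f x = 1) (hfmeas : Measurable f)
    (hsand : SandwichL1 𝒞 f k ν B) :
    |frac S (fun x => f x = 1) - (stdGaussian d {x | f x = 1}).toReal| ≤ ν + 2 * ε := by
  obtain ⟨pd, pu, hdeg, hsw, hL1⟩ := hsand
  have hμ := integrable_monomial_stdGaussian d
  have herr : ∀ q, (∀ A ∈ 𝒞, (q A).totalDegree ≤ k) → (∀ A ∈ 𝒞, ∀ m, |(q A).coeff m| ≤ B) →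
      |avg S (cellwiseEval 𝒞 q) - ∫ x, cellwiseEval 𝒞 q x ∂stdGaussian d| ≤ ε := by
    intro q hdeg hcoeff
    refine (abs_avg_sub_integral_cellwiseEval_le S hμ hmeas hB.le hdeg hcoeff hmom).trans ?_
    calc _ = ((d : ℝ) + 1) ^ k * #𝒞 * B * (ε / (((d : ℝ) + 1) ^ k * #𝒞 * B)) := by ring
      _ ≤ ε := mul_div_le_of_nonneg _ hε.le
  have hgap : ∫ x, cellwiseEval 𝒞 pu x ∂stdGaussian d
      - ∫ x, cellwiseEval 𝒞 pd x ∂stdGaussian d ≤ ν := by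
    rw [← integral_sub (integrable_cellwiseEval hμ hmeas pu)
      (integrable_cellwiseEval hμ hmeas pd)]
    simpa only [cellwiseEval_sub] using hL1
  have hfool := abs_avg_sub_integral_le_of_sandwich S (integrable_cellwiseEval hμ hmeas pd)
    (integrable_cellwiseEval hμ hmeas pu) hfmeas.aestronglyMeasurable
    (fun x => (hsw x).1) (fun x => (hsw x).2) hgap
    (herr pd (fun A hA => (hdeg A hA).1) (fun A hA => (hdeg A hA).2.2.1))
    (herr pu (fun A hA => (hdeg A hA).2.1) (fun A hA => (hdeg A hA).2.2.2))
  rw [frac_eq_avg_of_zero_or_one S hf01, ← measureReal_def,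
    measureReal_eq_integral_of_zero_or_one _ hf01 hfmeas]
  linarith

/-- If all moments of degree at most `k` restricted to the cells of the partition `𝒞` match
those of `N(0, I_d)` up to `ε/((d+1)^k·|𝒞|·B)`, then for every `{0,1}`-valued function with
`(ν, B)`-sandwiching degree at most `k` in `L1` under `N(0, I_d)` w.r.t. `𝒞`, the sample
probability of `f = 1` matches the Gaussian probability up to `ν + 2ε`. -/
theorem sandwiching_L1_implies_fooling
    {d k : ℕ} (hd : 1 ≤ d) (hk : 1 ≤ k) (B ε ν : ℝ) (hB : 0 < B) (hε : 0 < ε)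
    (𝒞 : Finset (Set (Fin d → ℝ)))
    (hmeas : ∀ A ∈ 𝒞, MeasurableSet A)
    (hdisj : ∀ A ∈ 𝒞, ∀ A' ∈ 𝒞, A ≠ A' → Disjoint A A')
    (hcover : ⋃₀ (𝒞 : Set (Set (Fin d → ℝ))) = Set.univ)
    {N : ℕ} (hN : 0 < N) (S : Fin N → (Fin d → ℝ))
    (hmom : ∀ A ∈ 𝒞, ∀ α : Fin d → ℕ, (∑ j, α j) ≤ k →
      |avg S (Set.indicator A (fun y => ∏ j, y j ^ α j))
          - ∫ x, Set.indicator A (fun y => ∏ j, y j ^ α j) x ∂(stdGaussian d)|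
        ≤ ε / (((d : ℝ) + 1) ^ k * (𝒞.card : ℝ) * B))
    (f : (Fin d → ℝ) → ℝ) (hf01 : ∀ x, f x = 0 ∨ f x = 1) (hfmeas : Measurable f)
    (hsand : SandwichL1 𝒞 f k ν B) :
    |frac S (fun x => f x = 1) - (stdGaussian d {x | f x = 1}).toReal| ≤ ν + 2 * ε :=
  sandwiching_L1_implies_fooling_general B ε ν hB hε 𝒞 hmeas S hmom f hf01 hfmeas hsand

end
end

section
/- Let d ≥ 1, k ≥ 0, B > 0, let q(z) = Σ_{i=0}^{k} c_i·z^i be a real polynomial in one variable with |c_i| ≤ B for all i, and let w ∈ ℝ^d be a unit vector. Then the polynomial x ↦ q(w·x), written in the monomial basis of real polynomials in d variables (of degree at most k), has every coefficient bounded in absolute value by (d+1)^k·(k+1)·B. -/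
/-!
Expanding `q(w·x) = ∑ᵢ cᵢ (w·x)ⁱ`, each coefficient of `(w·x)ⁱ` is, by the recursion
`(w·x)ⁱ⁺¹ = ∑ⱼ wⱼ xⱼ (w·x)ⁱ`, bounded by `(∑ⱼ |wⱼ|)ⁱ ≤ dⁱ`, since a unit vector has entries in
`[-1, 1]`. Summing the `k + 1` terms with `|cᵢ| ≤ B` gives the bound.
-/

open Real

noncomputable section

/-- Euclidean dot product on `ℝ^d`. -/
def dotp {d : ℕ} (v w : Fin d → ℝ) : ℝ := ∑ i, v i * w i

/-- `v` is a unit vector. -/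
def IsUnitVec {d : ℕ} (v : Fin d → ℝ) : Prop := dotp v v = 1

open MvPolynomial

section

variable {R σ : Type*} [CommRing R] [LinearOrder R] [IsStrictOrderedRing R]

theorem abs_coeff_linearForm_pow_le [Fintype σ] (w : σ → R) (i : ℕ) (m : σ →₀ ℕ) :
    |coeff m ((∑ j, C (w j) * X j : MvPolynomial σ R) ^ i)| ≤ (∑ j, |w j|) ^ i := by
  classical
  induction i generalizing m with
  | zero =>
    rw [pow_zero, pow_zero, coeff_one]
    split_ifs <;> simp
  | succ i ih =>
    rw [pow_succ, Finset.mul_sum, coeff_sum, pow_succ, Finset.mul_sum]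
    refine (Finset.abs_sum_le_sum_abs _ _).trans (Finset.sum_le_sum fun j _ => ?_)
    rw [← mul_assoc, mul_comm _ (C (w j)), mul_assoc, coeff_C_mul, coeff_mul_X', abs_mul,
      mul_comm]
    split_ifs
    · exact mul_le_mul_of_nonneg_right (ih _) (abs_nonneg _)
    · rw [abs_zero, zero_mul]
      exact mul_nonneg (pow_nonneg (Finset.sum_nonneg fun j _ => abs_nonneg (w j)) _)
        (abs_nonneg _)

theorem abs_coeff_aeval_le {p : MvPolynomial σ R} {q : Polynomial R} {k : ℕ} {B M : R}
    (hq : q.natDegree ≤ k) (hqc : ∀ n, |q.coeff n| ≤ B)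
    (hp : ∀ i ≤ k, ∀ m, |coeff m (p ^ i)| ≤ M) (m : σ →₀ ℕ) :
    |coeff m (Polynomial.aeval p q)| ≤ (k + 1) * B * M := by
  rw [Polynomial.aeval_eq_sum_range' (Nat.lt_succ_of_le hq), coeff_sum]
  calc |∑ i ∈ Finset.range (k + 1), coeff m (q.coeff i • p ^ i)|
      ≤ ∑ i ∈ Finset.range (k + 1), B * M := by
        refine (Finset.abs_sum_le_sum_abs _ _).trans (Finset.sum_le_sum fun i hi => ?_)
        rw [coeff_smul, smul_eq_mul, abs_mul]
        exact mul_le_mul (hqc i) (hp i (Finset.mem_range_succ_iff.mp hi) m) (abs_nonneg _)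
          ((abs_nonneg _).trans (hqc 0))
    _ = (k + 1) * B * M := by simp [mul_assoc]

end

theorem abs_le_one_of_isUnitVec {d : ℕ} {w : Fin d → ℝ} (hw : IsUnitVec w) (j : Fin d) :
    |w j| ≤ 1 := by
  have hsq : w j ^ 2 ≤ 1 :=
    calc w j ^ 2 = w j * w j := sq (w j)
      _ ≤ ∑ i, w i * w i := Finset.single_le_sum (fun i _ => mul_self_nonneg (w i))
          (Finset.mem_univ j)
      _ = 1 := hw
  exact (sq_le_one_iff_abs_le_one _).mp hsq

theorem coeff_bound_of_substituting_linear_form_general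
    {d k : ℕ} (B : ℝ)
    (q : Polynomial ℝ) (hq : q.natDegree ≤ k) (hqc : ∀ n, |q.coeff n| ≤ B)
    (w : Fin d → ℝ) (hw : IsUnitVec w) :
    ∀ m : Fin d →₀ ℕ,
      |MvPolynomial.coeff m
          (Polynomial.aeval
            (∑ i, MvPolynomial.C (w i) * MvPolynomial.X i : MvPolynomial (Fin d) ℝ) q)|
        ≤ ((d : ℝ) + 1) ^ k * ((k : ℝ) + 1) * B := by
  have hw1 : ∑ j, |w j| ≤ (d : ℝ) + 1 :=
    calc ∑ j, |w j| ≤ ∑ _j : Fin d, (1 : ℝ) :=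
          Finset.sum_le_sum fun j _ => abs_le_one_of_isUnitVec hw j
      _ ≤ (d : ℝ) + 1 := by simp
  have hpow : ∀ i ≤ k, ∀ m, |coeff m ((∑ j, C (w j) * X j : MvPolynomial (Fin d) ℝ) ^ i)|
      ≤ ((d : ℝ) + 1) ^ k := fun i hi m =>
    calc _ ≤ (∑ j, |w j|) ^ i := abs_coeff_linearForm_pow_le w i m
      _ ≤ ((d : ℝ) + 1) ^ i := pow_le_pow_left₀ (Finset.sum_nonneg fun j _ => abs_nonneg _) hw1 i
      _ ≤ ((d : ℝ) + 1) ^ k := pow_le_pow_right₀ (by linarith [d.cast_nonneg (α := ℝ)]) hi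
  intro m
  rw [mul_comm _ ((k : ℝ) + 1), mul_right_comm]
  exact abs_coeff_aeval_le hq hqc hpow m

/-- If `q` is a one-variable polynomial of degree at most `k` with coefficients bounded by `B`
and `w ∈ ℝ^d` is a unit vector, then the `d`-variable polynomial `x ↦ q(w·x)` has all its
monomial coefficients bounded by `(d+1)^k·(k+1)·B` in absolute value. -/
theorem coeff_bound_of_substituting_linear_form
    {d k : ℕ} (hd : 1 ≤ d) (B : ℝ) (hB : 0 < B)
    (q : Polynomial ℝ) (hq : q.natDegree ≤ k) (hqc : ∀ n, |q.coeff n| ≤ B)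
    (w : Fin d → ℝ) (hw : IsUnitVec w) :
    ∀ m : Fin d →₀ ℕ,
      |MvPolynomial.coeff m
          (Polynomial.aeval
            (∑ i, MvPolynomial.C (w i) * MvPolynomial.X i : MvPolynomial (Fin d) ℝ) q)|
        ≤ ((d : ℝ) + 1) ^ k * ((k : ℝ) + 1) * B :=
  coeff_bound_of_substituting_linear_form_general B q hq hqc w hw

end
end

section
/- Let d ≥ 2, let v, v' be unit vectors in ℝ^d with θ := ∠(v,v') ∈ (0, π/2), let v_⊥ := (v' − (v'·v)v)/‖v' − (v'·v)v‖, let ε > 0, and let S be a nonempty finite tuple of points of ℝ^d. Then Σ_{i=0}^{∞} Pr_{x∼S}[v·x ∈ [iε,(i+1)ε) and v_⊥·x ≤ −(i+1)ε/tan θ] ≤ Pr_{x∼S}[v·x ≥ 0 and v'·x < 0] ≤ Σ_{i=0}^{∞} Pr_{x∼S}[v·x ∈ [iε,(i+1)ε) and v_⊥·x ≤ −iε/tan θ] (all but finitely many terms of each series vanish). -/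
/-!
A point `x` with `v·x ≥ 0` lies in exactly one strip `i = ⌊v·x / ε⌋₊`, so each series is the mass
of a single region and both bounds reduce to pointwise implications. Since
`v'·x = cos θ (v·x) + sin θ (vperp·x)`, on the strip `iε ≤ v·x < (i+1)ε` the condition `v'·x < 0`
follows from `vperp·x ≤ -(i+1)ε / tan θ` and implies `vperp·x ≤ -iε / tan θ`.
-/

open Real

noncomputable section

/-- The angle `∠(v, v') = arccos (v ⬝ v')` between unit vectors. -/
def angleOf {d : ℕ} (v w : Fin d → ℝ) : ℝ := Real.arccos (dotp v w)

section Frac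

variable {N : ℕ} {α : Type*} (S : Fin N → α)

open Classical in
lemma frac_eq_sum_ite (P : α → Prop) :
    frac S P = (∑ j, if P (S j) then (1 : ℝ) else 0) / N := by
  rw [frac, cnt, Nat.card_eq_fintype_card, Fintype.card_subtype, Finset.sum_boole]

variable {S}

lemma frac_le_frac {P Q : α → Prop} (h : ∀ x, P x → Q x) : frac S P ≤ frac S Q := by
  unfold frac cnt
  gcongr
  exact Nat.card_mono (Set.toFinite _) fun j hj => h _ hj

lemma exists_of_frac_ne_zero {P : α → Prop} (h : frac S P ≠ 0) : ∃ j, P (S j) := by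
  by_contra! hP
  have : IsEmpty {j : Fin N // P (S j)} := ⟨fun j => hP j j.2⟩
  simp [frac, cnt] at h

variable {B : ℕ → α → Prop} {P : α → Prop} {k : α → ℕ}

lemma hasSum_frac_of_fibres (h : ∀ i x, B i x ↔ k x = i ∧ P x) :
    HasSum (fun i => frac S (B i)) (frac S P) := by
  classical
  simp only [frac_eq_sum_ite]
  refine (hasSum_sum fun j _ => ?_).div_const _
  have hfibre : (fun i => if B i (S j) then (1 : ℝ) else 0) =
      fun i => if i = k (S j) then (if P (S j) then 1 else 0) else 0 := by
    ext i
    by_cases hi : i = k (S j) <;> simp [h, hi, eq_comm]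
  exact hfibre ▸ hasSum_ite_eq _ _

lemma finite_setOf_frac_ne_zero_of_fibres (h : ∀ i x, B i x ↔ k x = i ∧ P x) :
    {i | frac S (B i) ≠ 0}.Finite :=
  (Set.finite_range (k ∘ S)).subset fun i hi => by
    obtain ⟨j, hj⟩ := exists_of_frac_ne_zero hi
    exact ⟨j, ((h i _).1 hj).1⟩

end Frac

section Buckets

lemma mem_bucket_iff {ε : ℝ} (hε : 0 < ε) (i : ℕ) (t : ℝ) :
    ((i : ℝ) * ε ≤ t ∧ t < ((i : ℝ) + 1) * ε) ↔ ⌊t / ε⌋₊ = i ∧ 0 ≤ t := by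
  constructor
  · rintro ⟨hi, hi'⟩
    have ht : 0 ≤ t := le_trans (by positivity) hi
    refine ⟨(Nat.floor_eq_iff (div_nonneg ht hε.le)).2 ⟨?_, ?_⟩, ht⟩
    · rwa [le_div_iff₀ hε]
    · rwa [div_lt_iff₀ hε]
  · rintro ⟨rfl, ht⟩
    have hfl := (Nat.floor_eq_iff (div_nonneg ht hε.le)).1 rfl
    rw [le_div_iff₀ hε, div_lt_iff₀ hε] at hfl
    exact hfl

variable {N : ℕ} {α : Type*} {S : Fin N → α} {ε : ℝ} (g : α → ℝ) (Q : ℕ → α → Prop)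

lemma bucket_iff_fibre (hε : 0 < ε) (i : ℕ) (x : α) :
    (((i : ℝ) * ε ≤ g x ∧ g x < ((i : ℝ) + 1) * ε) ∧ Q i x) ↔
      ⌊g x / ε⌋₊ = i ∧ 0 ≤ g x ∧ Q ⌊g x / ε⌋₊ x := by
  rw [mem_bucket_iff hε]
  constructor
  · rintro ⟨⟨rfl, ht⟩, hQ⟩
    exact ⟨rfl, ht, hQ⟩
  · rintro ⟨rfl, ht, hQ⟩
    exact ⟨⟨rfl, ht⟩, hQ⟩

lemma hasSum_frac_buckets (hε : 0 < ε) :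
    HasSum (fun i : ℕ => frac S fun x => ((i : ℝ) * ε ≤ g x ∧ g x < ((i : ℝ) + 1) * ε) ∧ Q i x)
      (frac S fun x => 0 ≤ g x ∧ Q ⌊g x / ε⌋₊ x) :=
  hasSum_frac_of_fibres (bucket_iff_fibre g Q hε)

lemma finite_setOf_frac_bucket_ne_zero (hε : 0 < ε) :
    {i : ℕ | (frac S fun x => ((i : ℝ) * ε ≤ g x ∧ g x < ((i : ℝ) + 1) * ε) ∧ Q i x) ≠ 0}.Finite :=
  finite_setOf_frac_ne_zero_of_fibres (bucket_iff_fibre g Q hε)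

end Buckets

section Geometry

variable {d : ℕ}

lemma dotp_comm (a b : Fin d → ℝ) : dotp a b = dotp b a := by
  simp only [dotp, mul_comm]

lemma dotp_sub_smul_left (a b x : Fin d → ℝ) (c : ℝ) :
    dotp (fun j => a j - c * b j) x = dotp a x - c * dotp b x := by
  simp only [dotp, sub_mul, Finset.sum_sub_distrib, Finset.mul_sum, mul_assoc]

lemma dotp_sub_smul_right (x a b : Fin d → ℝ) (c : ℝ) :
    dotp x (fun j => a j - c * b j) = dotp x a - c * dotp x b := by
  rw [dotp_comm, dotp_sub_smul_left, dotp_comm a, dotp_comm b]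

lemma dotp_div_left (a x : Fin d → ℝ) (s : ℝ) :
    dotp (fun j => a j / s) x = dotp a x / s := by
  simp only [dotp, div_mul_eq_mul_div, Finset.sum_div]

lemma dotp_sub_smul_self {v v' : Fin d → ℝ} (hv : IsUnitVec v) (hv' : IsUnitVec v') :
    dotp (fun j => v' j - dotp v' v * v j) (fun j => v' j - dotp v' v * v j) =
      1 - dotp v' v ^ 2 := by
  rw [dotp_sub_smul_left, dotp_sub_smul_right, dotp_sub_smul_right, hv, hv', dotp_comm v v']
  ring

lemma dotp_eq_cos_mul_add_sin_mul {v v' vperp : Fin d → ℝ} (hv : IsUnitVec v)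
    (hv' : IsUnitVec v')
    (hvperp : vperp = (fun i => (v' i - dotp v' v * v i) /
      Real.sqrt (dotp (fun j => v' j - dotp v' v * v j) (fun j => v' j - dotp v' v * v j))))
    (hsin : sin (angleOf v v') ≠ 0) (x : Fin d → ℝ) :
    dotp v' x = cos (angleOf v v') * dotp v x + sin (angleOf v v') * dotp vperp x := by
  rw [angleOf, dotp_comm v v', sin_arccos] at *
  rw [sqrt_ne_zero'] at hsin
  rw [cos_arccos (by nlinarith) (by nlinarith), hvperp, dotp_sub_smul_self hv hv',
    dotp_div_left, dotp_sub_smul_left]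
  field_simp
  ring

variable {θ t u a : ℝ}

lemma cos_pos_and_sin_pos (hθ : θ ∈ Set.Ioo 0 (π / 2)) : 0 < cos θ ∧ 0 < sin θ :=
  ⟨cos_pos_of_mem_Ioo ⟨by linarith [hθ.1, pi_pos], hθ.2⟩,
    sin_pos_of_pos_of_lt_pi hθ.1 (by linarith [hθ.2, pi_pos])⟩

lemma cos_mul_add_sin_mul_neg (hθ : θ ∈ Set.Ioo 0 (π / 2)) (ht : t < a)
    (hu : u ≤ -a / tan θ) : cos θ * t + sin θ * u < 0 := by
  obtain ⟨hc, hs⟩ := cos_pos_and_sin_pos hθ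
  rw [tan_eq_sin_div_cos, div_div_eq_mul_div, le_div_iff₀ hs] at hu
  nlinarith

lemma le_neg_div_tan_of_cos_mul_add_sin_mul_neg (hθ : θ ∈ Set.Ioo 0 (π / 2)) (ht : a ≤ t)
    (h : cos θ * t + sin θ * u < 0) : u ≤ -a / tan θ := by
  obtain ⟨hc, hs⟩ := cos_pos_and_sin_pos hθ
  rw [tan_eq_sin_div_cos, div_div_eq_mul_div, le_div_iff₀ hs]
  nlinarith

end Geometry

theorem disagreement_region_bucketing_general
    {d : ℕ} (v v' : Fin d → ℝ) (hv : IsUnitVec v) (hv' : IsUnitVec v')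
    (hθ : angleOf v v' ∈ Set.Ioo (0:ℝ) (π / 2))
    (vperp : Fin d → ℝ)
    (hvperp : vperp = (fun i => (v' i - dotp v' v * v i) /
      Real.sqrt (dotp (fun j => v' j - dotp v' v * v j)
        (fun j => v' j - dotp v' v * v j))))
    (ε : ℝ) (hε : 0 < ε)
    {N : ℕ} (S : Fin N → (Fin d → ℝ)) :
    {i : ℕ | frac S (fun x => ((i : ℝ) * ε ≤ dotp v x ∧ dotp v x < ((i : ℝ) + 1) * ε) ∧
        dotp vperp x ≤ -(((i : ℝ) + 1) * ε) / Real.tan (angleOf v v')) ≠ 0}.Finite ∧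
    {i : ℕ | frac S (fun x => ((i : ℝ) * ε ≤ dotp v x ∧ dotp v x < ((i : ℝ) + 1) * ε) ∧
        dotp vperp x ≤ -((i : ℝ) * ε) / Real.tan (angleOf v v')) ≠ 0}.Finite ∧
    (∑' i : ℕ, frac S (fun x => ((i : ℝ) * ε ≤ dotp v x ∧ dotp v x < ((i : ℝ) + 1) * ε) ∧
        dotp vperp x ≤ -(((i : ℝ) + 1) * ε) / Real.tan (angleOf v v')))
      ≤ frac S (fun x => 0 ≤ dotp v x ∧ dotp v' x < 0) ∧
    frac S (fun x => 0 ≤ dotp v x ∧ dotp v' x < 0)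
      ≤ ∑' i : ℕ, frac S (fun x => ((i : ℝ) * ε ≤ dotp v x ∧ dotp v x < ((i : ℝ) + 1) * ε) ∧
          dotp vperp x ≤ -((i : ℝ) * ε) / Real.tan (angleOf v v')) := by
  have hv'x := dotp_eq_cos_mul_add_sin_mul hv hv' hvperp (cos_pos_and_sin_pos hθ).2.ne'
  have hbucket (x : Fin d → ℝ) (h0 : 0 ≤ dotp v x) :=
    (mem_bucket_iff hε ⌊dotp v x / ε⌋₊ (dotp v x)).2 ⟨rfl, h0⟩
  refine ⟨finite_setOf_frac_bucket_ne_zero _ _ hε, finite_setOf_frac_bucket_ne_zero _ _ hε,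
    ?_, ?_⟩
  · rw [(hasSum_frac_buckets _ _ hε).tsum_eq]
    refine frac_le_frac fun x ⟨h0, hperp⟩ => ⟨h0, ?_⟩
    rw [hv'x]
    exact cos_mul_add_sin_mul_neg hθ (hbucket x h0).2 hperp
  · rw [(hasSum_frac_buckets _ _ hε).tsum_eq]
    refine frac_le_frac fun x ⟨h0, hneg⟩ => ⟨h0, ?_⟩
    rw [hv'x] at hneg
    exact le_neg_div_tan_of_cos_mul_add_sin_mul_neg hθ (hbucket x h0).1 hneg

/-- Bucketing the region `{v·x ≥ 0 > v'·x}` between two unions of simple strip regions: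
the empirical mass of the region is sandwiched between the two corresponding series
(all but finitely many terms of which vanish). -/
theorem disagreement_region_bucketing
    {d : ℕ} (hd : 2 ≤ d) (v v' : Fin d → ℝ) (hv : IsUnitVec v) (hv' : IsUnitVec v')
    (hθ : angleOf v v' ∈ Set.Ioo (0:ℝ) (π / 2))
    (vperp : Fin d → ℝ)
    (hvperp : vperp = (fun i => (v' i - dotp v' v * v i) /
      Real.sqrt (dotp (fun j => v' j - dotp v' v * v j)
        (fun j => v' j - dotp v' v * v j))))
    (ε : ℝ) (hε : 0 < ε)
    {N : ℕ} (hN : 0 < N) (S : Fin N → (Fin d → ℝ)) :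
    {i : ℕ | frac S (fun x => ((i : ℝ) * ε ≤ dotp v x ∧ dotp v x < ((i : ℝ) + 1) * ε) ∧
        dotp vperp x ≤ -(((i : ℝ) + 1) * ε) / Real.tan (angleOf v v')) ≠ 0}.Finite ∧
    {i : ℕ | frac S (fun x => ((i : ℝ) * ε ≤ dotp v x ∧ dotp v x < ((i : ℝ) + 1) * ε) ∧
        dotp vperp x ≤ -((i : ℝ) * ε) / Real.tan (angleOf v v')) ≠ 0}.Finite ∧
    (∑' i : ℕ, frac S (fun x => ((i : ℝ) * ε ≤ dotp v x ∧ dotp v x < ((i : ℝ) + 1) * ε) ∧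
        dotp vperp x ≤ -(((i : ℝ) + 1) * ε) / Real.tan (angleOf v v')))
      ≤ frac S (fun x => 0 ≤ dotp v x ∧ dotp v' x < 0) ∧
    frac S (fun x => 0 ≤ dotp v x ∧ dotp v' x < 0)
      ≤ ∑' i : ℕ, frac S (fun x => ((i : ℝ) * ε ≤ dotp v x ∧ dotp v x < ((i : ℝ) + 1) * ε) ∧
          dotp vperp x ≤ -((i : ℝ) * ε) / Real.tan (angleOf v v')) :=
  disagreement_region_bucketing_general v v' hv hv' hθ vperp hvperp ε hε S
end
end
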